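/- Tracial property of the twisted product: for all complex-valued Schwartz functions f and g on ℝ^{2N}, ∫ (f × g)(u) du = ∫ (g × f)(u) du = ∫ f(u) g(u) du. -/

import Mathlib

/-!
Write `σ(s, t) = ⟪J s, t⟫` with `J` the standard complex structure of `ℝ^{2N}`, an isometry; note
`σ(s, s) = 0`. A translation turns the `t`-integral in `(f × g)(u)` into the phase `e^{-iσ(s,u)}`
times `𝓕⁻ g (J s / 2π)`. The resulting integrand is absolutely integrable in `(u, s)`, so the
`u`-integral may be taken first; since `σ(s, s) = 0` it is `𝓕 f (J s / 2π)`. Rescaling `s`, the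
Parseval identity `∫ 𝓕 f · 𝓕⁻ g = ∫ f g` gives `∫ f × g = ∫ f g`, which is symmetric in `f` and `g`.
-/

open MeasureTheory SchwartzMap Complex

noncomputable section

abbrev PS (N : ℕ) := EuclideanSpace ℝ (Fin N ⊕ Fin N)

def symp {N : ℕ} (u v : PS N) : ℝ :=
  ∑ i : Fin N, (u (Sum.inl i) * v (Sum.inr i) - u (Sum.inr i) * v (Sum.inl i))

def mes (N : ℕ) : Measure (PS N) :=
  (ENNReal.ofReal ((2 * Real.pi) ^ N))⁻¹ • (volume : Measure (PS N))

def twProd {N : ℕ} (f g : PS N → ℂ) : PS N → ℂ := fun u =>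
  ∫ s, ∫ t, f (u + s) * g (u + t) * Complex.exp (Complex.I * (symp s t : ℂ)) ∂(mes N) ∂(mes N)

open scoped FourierTransform RealInnerProductSpace Real

theorem MeasureTheory.Integrable.mul_comp_add_prod {G 𝕜 : Type*} [AddGroup G] [MeasurableSpace G]
    [MeasurableAdd₂ G] [NormedRing 𝕜] {μ : Measure G} [SFinite μ] [μ.IsAddLeftInvariant]
    {f h : G → 𝕜} (hf : Integrable f μ) (hh : Integrable h μ) :
    Integrable (fun p : G × G => h p.2 * f (p.2 + p.1)) (μ.prod μ) :=
  ((measurePreserving_prod_add_swap μ μ).integrable_comp (hh.mul_prod hf).1).2 (hh.mul_prod hf)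

section FourierSpace

open Module

variable {V : Type*} [NormedAddCommGroup V] [InnerProductSpace ℝ V] [FiniteDimensional ℝ V]
  [MeasurableSpace V] [BorelSpace V]

theorem integral_mul_exp_inner_eq_fourierInv (g : V → ℂ) (w : V) :
    ∫ t, g t * exp (I * ⟪w, t⟫) = 𝓕⁻ g ((2 * π)⁻¹ • w) := by
  rw [Real.fourierInv_eq']
  congr 1 with t
  rw [smul_eq_mul, inner_smul_right, real_inner_comm, mul_comm (g t)]
  congr 2
  push_cast
  field_simp

theorem integral_mul_exp_neg_inner_eq_fourier (f : V → ℂ) (w : V) :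
    ∫ t, f t * exp (-(I * ⟪w, t⟫)) = 𝓕 f ((2 * π)⁻¹ • w) := by
  rw [Real.fourier_eq']
  congr 1 with t
  rw [smul_eq_mul, inner_smul_right, real_inner_comm, mul_comm (f t)]
  congr 2
  push_cast
  field_simp

theorem integral_comp_add_left_mul_exp_inner (g : V → ℂ) (u w : V) :
    ∫ t, g (u + t) * exp (I * ⟪w, t⟫) = exp (-(I * ⟪w, u⟫)) * 𝓕⁻ g ((2 * π)⁻¹ • w) := by
  have phase_shift : ∀ t, g (u + t) * exp (I * ⟪w, t⟫) =
      exp (-(I * ⟪w, u⟫)) * (g (u + t) * exp (I * ⟪w, u + t⟫)) := fun t => by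
    rw [inner_add_right, ofReal_add, mul_add, exp_add, exp_neg]
    field_simp
  simp_rw [phase_shift, integral_const_mul,
    integral_add_left_eq_self (fun v => g v * exp (I * ⟪w, v⟫)),
    integral_mul_exp_inner_eq_fourierInv]

theorem integral_comp_add_right_mul_exp_neg_inner (f : V → ℂ) (s w : V) :
    ∫ u, f (u + s) * exp (-(I * ⟪w, u⟫)) = exp (I * ⟪w, s⟫) * 𝓕 f ((2 * π)⁻¹ • w) := by
  have phase_shift : ∀ u, f (u + s) * exp (-(I * ⟪w, u⟫)) =
      exp (I * ⟪w, s⟫) * (f (u + s) * exp (-(I * ⟪w, u + s⟫))) := fun u => by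
    rw [inner_add_right, ofReal_add, mul_add, neg_add, exp_add, exp_neg (I * ⟪w, s⟫)]
    field_simp
  simp_rw [phase_shift, integral_const_mul,
    integral_add_right_eq_self (fun v => f v * exp (-(I * ⟪w, v⟫))),
    integral_mul_exp_neg_inner_eq_fourier]

theorem integral_fourier_mul_fourierInv (f g : 𝓢(V, ℂ)) :
    ∫ ξ, 𝓕 (⇑f) ξ * 𝓕⁻ (⇑g) ξ = ∫ x, f x * g x := by
  simpa [fourier_coe, fourierInv_coe, FourierTransform.fourier_fourierInv_eq] using
    integral_fourier_mul_eq f (𝓕⁻ g)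

theorem integrable_comp_add_mul_exp_inner_mul_fourierInv (J : V ≃ₗᵢ[ℝ] V) {f : V → ℂ}
    (hf : Integrable f) (g : 𝓢(V, ℂ)) :
    Integrable (fun p : V × V => f (p.1 + p.2) * exp (-(I * ⟪J p.2, p.1⟫)) *
      𝓕⁻ (⇑g) ((2 * π)⁻¹ • J p.2)) (volume.prod volume) := by
  have hg : Integrable (fun s => 𝓕⁻ (⇑g) ((2 * π)⁻¹ • J s)) := by
    rw [← fourierInv_coe]
    exact (J.measurePreserving.integrable_comp_emb J.toHomeomorph.measurableEmbedding).2
      ((𝓕⁻ g).integrable.comp_smul (R := (2 * π)⁻¹) (by positivity))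
  refine ((hf.mul_comp_add_prod hg).bdd_mul
    (f := fun p : V × V => exp (-(I * ⟪J p.2, p.1⟫))) (c := 1) ?_ ?_).congr ?_
  · fun_prop
  · exact .of_forall fun p => by simp [norm_exp]
  · exact .of_forall fun p => by simp only [add_comm p.2]; ring

theorem integral_integral_integral_mul_exp_inner_eq (J : V ≃ₗᵢ[ℝ] V) (hJ : ∀ s, ⟪J s, s⟫ = 0)
    (f g : 𝓢(V, ℂ)) :
    ∫ u, ∫ s, ∫ t, f (u + s) * g (u + t) * exp (I * ⟪J s, t⟫) =
      (2 * π) ^ finrank ℝ V * ∫ u, f u * g u := by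
  calc ∫ u, ∫ s, ∫ t, f (u + s) * g (u + t) * exp (I * ⟪J s, t⟫)
      = ∫ u, ∫ s, f (u + s) * exp (-(I * ⟪J s, u⟫)) * 𝓕⁻ (⇑g) ((2 * π)⁻¹ • J s) := by
        refine integral_congr_ae (.of_forall fun u => integral_congr_ae (.of_forall fun s => ?_))
        simp_rw [mul_assoc, integral_const_mul, integral_comp_add_left_mul_exp_inner]
    _ = ∫ s, ∫ u, f (u + s) * exp (-(I * ⟪J s, u⟫)) * 𝓕⁻ (⇑g) ((2 * π)⁻¹ • J s) :=
        integral_integral_swap (integrable_comp_add_mul_exp_inner_mul_fourierInv J f.integrable g)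
    _ = ∫ s, 𝓕 (⇑f) ((2 * π)⁻¹ • J s) * 𝓕⁻ (⇑g) ((2 * π)⁻¹ • J s) := by
        refine integral_congr_ae (.of_forall fun s => ?_)
        simp only [integral_mul_const, integral_comp_add_right_mul_exp_neg_inner, hJ, ofReal_zero,
          mul_zero, exp_zero, one_mul]
    _ = (2 * π) ^ finrank ℝ V * ∫ ξ, 𝓕 (⇑f) ξ * 𝓕⁻ (⇑g) ξ := by
        rw [J.measurePreserving.integral_comp J.toHomeomorph.measurableEmbedding
          (fun v => 𝓕 (⇑f) ((2 * π)⁻¹ • v) * 𝓕⁻ (⇑g) ((2 * π)⁻¹ • v)),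
          Measure.integral_comp_inv_smul volume (fun ξ => 𝓕 (⇑f) ξ * 𝓕⁻ (⇑g) ξ),
          abs_of_pos (by positivity), real_smul]
        push_cast
        rfl
    _ = (2 * π) ^ finrank ℝ V * ∫ u, f u * g u := by rw [integral_fourier_mul_fourierInv]

end FourierSpace

section PhaseSpace

variable {N : ℕ}

def symplecticJ (N : ℕ) : PS N ≃ₗᵢ[ℝ] PS N :=
  (LinearIsometryEquiv.piLpCongrLeft 2 ℝ ℝ (Equiv.sumComm (Fin N) (Fin N))).trans
    (LinearIsometryEquiv.piLpCongrRight 2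
      (Sum.elim (fun _ => LinearIsometryEquiv.neg ℝ) (fun _ => LinearIsometryEquiv.refl ℝ ℝ)))

theorem symplecticJ_apply_inl (s : PS N) (i : Fin N) :
    symplecticJ N s (Sum.inl i) = -s (Sum.inr i) := rfl

theorem symplecticJ_apply_inr (s : PS N) (i : Fin N) :
    symplecticJ N s (Sum.inr i) = s (Sum.inl i) := rfl

theorem symp_eq_inner (s t : PS N) : symp s t = ⟪symplecticJ N s, t⟫ := by
  simp only [symp, PiLp.inner_apply, Fintype.sum_sum_type, symplecticJ_apply_inl,
    symplecticJ_apply_inr, RCLike.inner_apply, conj_trivial, ← Finset.sum_add_distrib]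
  exact Finset.sum_congr rfl fun i _ => by ring

theorem symp_self (s : PS N) : symp s s = 0 :=
  Finset.sum_eq_zero fun i _ => by ring

theorem inner_symplecticJ_self (s : PS N) : ⟪symplecticJ N s, s⟫ = 0 := by
  rw [← symp_eq_inner, symp_self]

theorem integral_mes (h : PS N → ℂ) :
    ∫ u, h u ∂mes N = ((2 * π) ^ N)⁻¹ • ∫ u, h u := by
  rw [mes, integral_smul_measure, ENNReal.toReal_inv, ENNReal.toReal_ofReal (by positivity)]

theorem twProd_eq (f g : PS N → ℂ) (u : PS N) :
    twProd f g u = ((2 * π) ^ N)⁻¹ • ((2 * π) ^ N)⁻¹ •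
      ∫ s, ∫ t, f (u + s) * g (u + t) * exp (I * ⟪symplecticJ N s, t⟫) := by
  simp only [twProd, integral_mes, integral_smul, symp_eq_inner]

theorem integral_twProd (f g : 𝓢(PS N, ℂ)) :
    ∫ u, twProd (⇑f) (⇑g) u ∂mes N = ∫ u, f u * g u ∂mes N := by
  simp only [integral_mes, twProd_eq, integral_smul,
    integral_integral_integral_mul_exp_inner_eq _ inner_symplecticJ_self,
    finrank_euclideanSpace, Fintype.card_sum, Fintype.card_fin]
  simp only [real_smul]
  push_cast
  field_simp
  ring

end PhaseSpace

theorem twProd_tracial_general (N : ℕ)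
    (f g : SchwartzMap (PS N) ℂ) :
    (∫ u, twProd (⇑f) (⇑g) u ∂(mes N)) = (∫ u, twProd (⇑g) (⇑f) u ∂(mes N)) ∧
    (∫ u, twProd (⇑f) (⇑g) u ∂(mes N)) = ∫ u, f u * g u ∂(mes N) := by
  refine ⟨?_, integral_twProd f g⟩
  simp only [integral_twProd, mul_comm]

theorem twProd_tracial (N : ℕ) (hN : 0 < N)
    (f g : SchwartzMap (PS N) ℂ) :
    (∫ u, twProd (⇑f) (⇑g) u ∂(mes N)) = (∫ u, twProd (⇑g) (⇑f) u ∂(mes N)) ∧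
    (∫ u, twProd (⇑f) (⇑g) u ∂(mes N)) = ∫ u, f u * g u ∂(mes N) :=
  twProd_tracial_general N f g
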